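/- arXiv:math/0407410 — 3 statements merged into one kernel-verified Lean document; each statement's English description precedes it below -/
import Mathlib

section
/- For θ ∈ (0, π/2) the curve ν_θ is locally convex: det(ν_θ(t), ν_θ'(t), ν_θ''(t)) > 0 for all t ∈ [0,1]. For θ = π/2 this determinant is identically zero. -/
noncomputable section

open Real Matrix

/-- Determinant of the 3×3 matrix whose *columns* are `v₁, v₂, v₃`. -/
def det3 (v₁ v₂ v₃ : Fin 3 → ℝ) : ℝ :=
  Matrix.det (Matrix.of ![v₁, v₂, v₃])ᵀ

/-- `v` lies on the unit sphere `S² ⊂ ℝ³`. -/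
def onSphere (v : Fin 3 → ℝ) : Prop :=
  v 0 ^ 2 + v 1 ^ 2 + v 2 ^ 2 = 1

/-- Euclidean norm on `ℝ³`. -/
def enorm3 (v : Fin 3 → ℝ) : ℝ :=
  Real.sqrt (v 0 ^ 2 + v 1 ^ 2 + v 2 ^ 2)

/-- Cross product on `ℝ³`. -/
def cross3 (u v : Fin 3 → ℝ) : Fin 3 → ℝ :=
  ![u 1 * v 2 - u 2 * v 1, u 2 * v 0 - u 0 * v 2, u 0 * v 1 - u 1 * v 0]

/-- The frame of a spherical immersion: the matrix with columns
`γ(t)`, `γ'(t)/|γ'(t)|` and `γ(t) × (γ'(t)/|γ'(t)|)`. -/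
def frame (γ : ℝ → Fin 3 → ℝ) (t : ℝ) : Matrix (Fin 3) (Fin 3) ℝ :=
  (Matrix.of
    ![γ t, (enorm3 (deriv γ t))⁻¹ • deriv γ t,
      cross3 (γ t) ((enorm3 (deriv γ t))⁻¹ • deriv γ t)])ᵀ

/-- The circle `ν_θ`. -/
def nuTheta (θ : ℝ) (t : ℝ) : Fin 3 → ℝ :=
  ![cos θ ^ 2 + sin θ ^ 2 * cos (2 * π * t),
    sin θ * sin (2 * π * t),
    cos θ * sin θ * (1 - cos (2 * π * t))]

/-- First derivative of `ν_θ`. -/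
def nuTheta1 (θ : ℝ) (t : ℝ) : Fin 3 → ℝ :=
  ![sin θ ^ 2 * (-sin (2 * π * t) * (2 * π)),
    sin θ * (cos (2 * π * t) * (2 * π)),
    cos θ * sin θ * (sin (2 * π * t) * (2 * π))]

/-- Second derivative of `ν_θ`. -/
def nuTheta2 (θ : ℝ) (t : ℝ) : Fin 3 → ℝ :=
  ![sin θ ^ 2 * (-(cos (2 * π * t) * (2 * π)) * (2 * π)),
    sin θ * (-sin (2 * π * t) * (2 * π) * (2 * π)),
    cos θ * sin θ * (cos (2 * π * t) * (2 * π) * (2 * π))]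

lemma hasDerivAt_lin (t : ℝ) : HasDerivAt (fun s : ℝ => 2 * π * s) (2 * π) t := by
  simpa using (hasDerivAt_id t).const_mul (2 * π)

lemma nuTheta_hasDerivAt (θ t : ℝ) : HasDerivAt (nuTheta θ) (nuTheta1 θ t) t := by
  rw [hasDerivAt_pi]
  intro i
  fin_cases i
  · have : HasDerivAt (fun s => cos θ ^ 2 + sin θ ^ 2 * cos (2 * π * s))
        (sin θ ^ 2 * (-sin (2 * π * t) * (2 * π))) t :=
      (((hasDerivAt_lin t).cos).const_mul (sin θ ^ 2)).const_add (cos θ ^ 2)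
    simpa [nuTheta, nuTheta1] using this
  · have : HasDerivAt (fun s => sin θ * sin (2 * π * s))
        (sin θ * (cos (2 * π * t) * (2 * π))) t :=
      ((hasDerivAt_lin t).sin).const_mul (sin θ)
    simpa [nuTheta, nuTheta1] using this
  · have : HasDerivAt (fun s => cos θ * sin θ * (1 - cos (2 * π * s)))
        (cos θ * sin θ * (sin (2 * π * t) * (2 * π))) t := by
      have h : HasDerivAt (fun s : ℝ => 1 - cos (2 * π * s))
          (sin (2 * π * t) * (2 * π)) t := by
        simpa using ((hasDerivAt_lin t).cos).const_sub 1
      exact h.const_mul (cos θ * sin θ)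
    simpa [nuTheta, nuTheta1] using this

lemma nuTheta1_hasDerivAt (θ t : ℝ) : HasDerivAt (nuTheta1 θ) (nuTheta2 θ t) t := by
  rw [hasDerivAt_pi]
  intro i
  fin_cases i
  · have : HasDerivAt (fun s => sin θ ^ 2 * (-sin (2 * π * s) * (2 * π)))
        (sin θ ^ 2 * (-(cos (2 * π * t) * (2 * π)) * (2 * π))) t := by
      have h : HasDerivAt (fun s : ℝ => -sin (2 * π * s) * (2 * π))
          (-(cos (2 * π * t) * (2 * π)) * (2 * π)) t := by
        simpa [mul_comm, mul_left_comm, mul_assoc] using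
          (((hasDerivAt_lin t).sin).neg).mul_const (2 * π)
      exact h.const_mul (sin θ ^ 2)
    simpa [nuTheta1, nuTheta2] using this
  · have : HasDerivAt (fun s => sin θ * (cos (2 * π * s) * (2 * π)))
        (sin θ * (-sin (2 * π * t) * (2 * π) * (2 * π))) t := by
      have h : HasDerivAt (fun s : ℝ => cos (2 * π * s) * (2 * π))
          (-sin (2 * π * t) * (2 * π) * (2 * π)) t :=
        ((hasDerivAt_lin t).cos).mul_const (2 * π)
      exact h.const_mul (sin θ)
    simpa [nuTheta1, nuTheta2] using this
  · have : HasDerivAt (fun s => cos θ * sin θ * (sin (2 * π * s) * (2 * π)))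
        (cos θ * sin θ * (cos (2 * π * t) * (2 * π) * (2 * π))) t := by
      have h : HasDerivAt (fun s : ℝ => sin (2 * π * s) * (2 * π))
          (cos (2 * π * t) * (2 * π) * (2 * π)) t :=
        ((hasDerivAt_lin t).sin).mul_const (2 * π)
      exact h.const_mul (cos θ * sin θ)
    simpa [nuTheta1, nuTheta2] using this

lemma nuTheta_deriv_eq (θ : ℝ) : deriv (nuTheta θ) = nuTheta1 θ :=
  funext fun t => (nuTheta_hasDerivAt θ t).deriv

lemma nuTheta_deriv2_eq (θ : ℝ) : deriv (deriv (nuTheta θ)) = nuTheta2 θ := by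
  rw [nuTheta_deriv_eq]
  exact funext fun t => (nuTheta1_hasDerivAt θ t).deriv

lemma nuTheta_det (θ t : ℝ) :
    det3 (nuTheta θ t) (nuTheta1 θ t) (nuTheta2 θ t)
      = (2 * π) ^ 3 * cos θ * sin θ ^ 2 := by
  have h1 : sin (2 * π * t) ^ 2 + cos (2 * π * t) ^ 2 = 1 := sin_sq_add_cos_sq _
  have h2 : sin θ ^ 2 + cos θ ^ 2 = 1 := sin_sq_add_cos_sq _
  simp only [det3, nuTheta, nuTheta1, nuTheta2, Matrix.det_transpose,
    Matrix.det_fin_three, Matrix.of_apply, Matrix.cons_val', Matrix.cons_val_zero,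
    Matrix.cons_val_one, Matrix.head_cons, Matrix.empty_val', Matrix.cons_val_fin_one,
    Matrix.cons_val_two, Matrix.tail_cons, Matrix.head_fin_const]
  linear_combination ((2*π)^3 * cos θ * sin θ^2 * (sin θ^2 + cos θ^2)) * h1 +
    ((2*π)^3 * cos θ * sin θ^2) * h2

/-- For `θ ∈ (0,π/2)` the curve `ν_θ` is locally convex:
`det(ν_θ(t), ν_θ'(t), ν_θ''(t)) > 0` for all `t ∈ [0,1]`;
for `θ = π/2` this determinant vanishes identically. -/
theorem nuTheta_locally_convex :
    (∀ θ ∈ Set.Ioo 0 (π / 2), ∀ t ∈ Set.Icc (0 : ℝ) 1,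
      0 < det3 (nuTheta θ t) (deriv (nuTheta θ) t) (deriv (deriv (nuTheta θ)) t)) ∧
    (∀ t : ℝ,
      det3 (nuTheta (π / 2) t) (deriv (nuTheta (π / 2)) t)
        (deriv (deriv (nuTheta (π / 2))) t) = 0) := by
  have key : ∀ θ t : ℝ,
      det3 (nuTheta θ t) (deriv (nuTheta θ) t) (deriv (deriv (nuTheta θ)) t)
        = (2 * π) ^ 3 * cos θ * sin θ ^ 2 := by
    intro θ t
    rw [nuTheta_deriv2_eq, nuTheta_deriv_eq, nuTheta_det]
  constructor
  · intro θ hθ t _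
    rw [key]
    have h1 : 0 < cos θ := Real.cos_pos_of_mem_Ioo
      ⟨by linarith [hθ.1, Real.pi_pos], hθ.2⟩
    have h2 : 0 < sin θ := Real.sin_pos_of_pos_of_lt_pi hθ.1
      (by linarith [hθ.2, Real.pi_pos])
    positivity
  · intro t
    rw [key, Real.cos_pi_div_two]
    ring
end
end

section
/- Define α₀(s,t) = (sin s·cos t, sin s·sin t, cos s), α₁(s,t) = (-sin t, cos t, 0), α₂(s,t) = (-cos s·cos t, -cos s·sin t, sin s), and g_s(t) = (√2/2)(α₀(s,t) + cos(3t)·α₁(s,t) + sin(3t)·α₂(s,t)). Then for all s ∈ [0,π] and all t, the point g_s(t) lies on the unit sphere S² and det(g_s(t), ∂_t g_s(t), ∂_t² g_s(t)) > 0. -/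
/-!
`(α₀, α₁, α₂)` is a positively oriented orthonormal frame moving along the circle `t ↦ α₀(s,t)`
by `α₀' = sin s α₁`, `α₁' = -sin s α₀ + cos s α₂`, `α₂' = -cos s α₁`. In this frame `g_s` has
coordinates `(√2/2)(1, cos 3t, sin 3t)`, so `|g_s| = 1`, and `det(g_s, g_s', g_s'')` is the
determinant of the coordinate vectors of `g_s, g_s', g_s''`. That determinant works out to
`(√2/2)³ P(cos s, sin s sin 3t)` with `P(K, x) = 27 + 29K + 11x + 9K² - 9x² - (K + x)³`, and
`P` is positive on the closed unit disc.
-/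

noncomputable section

open Real Matrix

def alpha0 (s t : ℝ) : Fin 3 → ℝ := ![sin s * cos t, sin s * sin t, cos s]

def alpha1 (_s t : ℝ) : Fin 3 → ℝ := ![-sin t, cos t, 0]

def alpha2 (s t : ℝ) : Fin 3 → ℝ := ![-cos s * cos t, -cos s * sin t, sin s]

/-- The family of curves `g_s(t)` from the paper. -/
def gCurve (s : ℝ) (t : ℝ) : Fin 3 → ℝ :=
  (Real.sqrt 2 / 2) •
    (alpha0 s t + cos (3 * t) • alpha1 s t + sin (3 * t) • alpha2 s t)

theorem hasDerivAt_vec3 {f₀ f₁ f₂ : ℝ → ℝ} {f₀' f₁' f₂' t : ℝ} (h₀ : HasDerivAt f₀ f₀' t)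
    (h₁ : HasDerivAt f₁ f₁' t) (h₂ : HasDerivAt f₂ f₂' t) :
    HasDerivAt (fun τ => ![f₀ τ, f₁ τ, f₂ τ]) ![f₀', f₁', f₂'] t := by
  refine hasDerivAt_pi.2 fun i => ?_
  fin_cases i <;> assumption

theorem det3_apply (u v w : Fin 3 → ℝ) :
    det3 u v w = u 0 * (v 1 * w 2 - v 2 * w 1) - v 0 * (u 1 * w 2 - u 2 * w 1)
      + w 0 * (u 1 * v 2 - u 2 * v 1) := by
  simp only [det3, det_transpose, det_fin_three, of_apply, cons_val_zero, cons_val_one,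
    cons_val_two, tail_cons, head_cons]
  ring

theorem det3_linComb (e₀ e₁ e₂ u v w : Fin 3 → ℝ) :
    det3 (u 0 • e₀ + u 1 • e₁ + u 2 • e₂) (v 0 • e₀ + v 1 • e₁ + v 2 • e₂)
      (w 0 • e₀ + w 1 • e₁ + w 2 • e₂) = det3 u v w * det3 e₀ e₁ e₂ := by
  simp only [det3_apply, Pi.add_apply, Pi.smul_apply, smul_eq_mul]
  ring

def frameComb (s x y z t : ℝ) : Fin 3 → ℝ :=
  x • alpha0 s t + y • alpha1 s t + z • alpha2 s t

theorem hasDerivAt_alpha0 (s t : ℝ) : HasDerivAt (alpha0 s) (sin s • alpha1 s t) t := by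
  refine (hasDerivAt_vec3 ((hasDerivAt_cos t).const_mul (sin s))
    ((hasDerivAt_sin t).const_mul (sin s)) (hasDerivAt_const t (cos s))).congr_deriv ?_
  rw [alpha1, smul_vec3]
  exact vec3_eq (by ring) (by ring) (by ring)

theorem hasDerivAt_alpha1 (s t : ℝ) :
    HasDerivAt (alpha1 s) ((-sin s) • alpha0 s t + cos s • alpha2 s t) t := by
  refine (hasDerivAt_vec3 (hasDerivAt_sin t).fun_neg (hasDerivAt_cos t)
    (hasDerivAt_const t 0)).congr_deriv ?_
  rw [alpha0, alpha2, smul_vec3, smul_vec3, vec3_add]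
  exact vec3_eq (by linear_combination cos t * sin_sq_add_cos_sq s)
    (by linear_combination sin t * sin_sq_add_cos_sq s) (by ring)

theorem hasDerivAt_alpha2 (s t : ℝ) : HasDerivAt (alpha2 s) ((-cos s) • alpha1 s t) t := by
  refine (hasDerivAt_vec3 ((hasDerivAt_cos t).const_mul (-cos s))
    ((hasDerivAt_sin t).const_mul (-cos s)) (hasDerivAt_const t (sin s))).congr_deriv ?_
  rw [alpha1, smul_vec3]
  exact vec3_eq (by ring) (by ring) (by ring)

theorem hasDerivAt_frameComb {x y z : ℝ → ℝ} {x' y' z' t : ℝ} (s : ℝ)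
    (hx : HasDerivAt x x' t) (hy : HasDerivAt y y' t) (hz : HasDerivAt z z' t) :
    HasDerivAt (fun τ => frameComb s (x τ) (y τ) (z τ) τ)
      (frameComb s (x' - sin s * y t) (y' + sin s * x t - cos s * z t) (z' + cos s * y t) t) t := by
  refine (((hx.smul (hasDerivAt_alpha0 s t)).add (hy.smul (hasDerivAt_alpha1 s t))).add
    (hz.smul (hasDerivAt_alpha2 s t))).congr_deriv ?_
  simp only [frameComb]
  module

theorem frameComb_eq (s x y z t : ℝ) :
    frameComb s x y z t = ![x * sin s * cos t - y * sin t - z * cos s * cos t,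
      x * sin s * sin t + y * cos t - z * cos s * sin t, x * cos s + z * sin s] := by
  rw [frameComb, alpha0, alpha1, alpha2, smul_vec3, smul_vec3, smul_vec3, vec3_add, vec3_add]
  exact vec3_eq (by ring) (by ring) (by ring)

theorem sum_sq_frameComb (s x y z t : ℝ) :
    frameComb s x y z t 0 ^ 2 + frameComb s x y z t 1 ^ 2 + frameComb s x y z t 2 ^ 2
      = x ^ 2 + y ^ 2 + z ^ 2 := by
  simp only [frameComb_eq, cons_val_zero, cons_val_one, cons_val_two, tail_cons, head_cons]
  linear_combination ((x * sin s - z * cos s) ^ 2 + y ^ 2) * sin_sq_add_cos_sq t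
    + (x ^ 2 + z ^ 2) * sin_sq_add_cos_sq s

theorem det3_alpha (s t : ℝ) : det3 (alpha0 s t) (alpha1 s t) (alpha2 s t) = 1 := by
  simp only [det3_apply, alpha0, alpha1, alpha2, cons_val_zero, cons_val_one, cons_val_two,
    tail_cons, head_cons]
  linear_combination (sin s ^ 2 + cos s ^ 2) * sin_sq_add_cos_sq t + sin_sq_add_cos_sq s

theorem det3_frameComb (s x₁ y₁ z₁ x₂ y₂ z₂ x₃ y₃ z₃ t : ℝ) :
    det3 (frameComb s x₁ y₁ z₁ t) (frameComb s x₂ y₂ z₂ t) (frameComb s x₃ y₃ z₃ t)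
      = det3 ![x₁, y₁, z₁] ![x₂, y₂, z₂] ![x₃, y₃, z₃] := by
  have h := det3_linComb (alpha0 s t) (alpha1 s t) (alpha2 s t)
    ![x₁, y₁, z₁] ![x₂, y₂, z₂] ![x₃, y₃, z₃]
  rwa [det3_alpha, mul_one] at h

theorem gCurve_eq_frameComb (s : ℝ) :
    gCurve s = fun t => frameComb s (√2 / 2) (√2 / 2 * cos (3 * t)) (√2 / 2 * sin (3 * t)) t := by
  funext t
  simp only [gCurve, frameComb, smul_add, smul_smul]

theorem hasDerivAt_gCurve (s t : ℝ) :
    HasDerivAt (gCurve s)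
      (frameComb s (-(√2 / 2 * sin s) * cos (3 * t))
        (√2 / 2 * sin s - √2 / 2 * (3 + cos s) * sin (3 * t))
        (√2 / 2 * (3 + cos s) * cos (3 * t)) t) t := by
  have h3 : HasDerivAt (fun τ => 3 * τ) 3 t := hasDerivAt_const_mul 3
  rw [gCurve_eq_frameComb]
  refine (hasDerivAt_frameComb s (hasDerivAt_const t _) (h3.cos.const_mul _)
    (h3.sin.const_mul _)).congr_deriv ?_
  congr 1 <;> ring

theorem deriv_gCurve (s : ℝ) :
    deriv (gCurve s) = fun t => frameComb s (-(√2 / 2 * sin s) * cos (3 * t))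
        (√2 / 2 * sin s - √2 / 2 * (3 + cos s) * sin (3 * t))
        (√2 / 2 * (3 + cos s) * cos (3 * t)) t :=
  funext fun t => (hasDerivAt_gCurve s t).deriv

theorem hasDerivAt_deriv_gCurve (s t : ℝ) :
    HasDerivAt (deriv (gCurve s))
      (frameComb s (√2 / 2 * sin s * ((6 + cos s) * sin (3 * t) - sin s))
        (-(√2 / 2 * (10 + 6 * cos s) * cos (3 * t)))
        (√2 / 2 * (sin s * cos s - (3 + cos s) ^ 2 * sin (3 * t))) t) t := by
  have h3 : HasDerivAt (fun τ => 3 * τ) 3 t := hasDerivAt_const_mul 3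
  rw [deriv_gCurve]
  refine (hasDerivAt_frameComb s (h3.cos.const_mul _)
    ((hasDerivAt_const t _).fun_sub (h3.sin.const_mul _)) (h3.cos.const_mul _)).congr_deriv ?_
  congr 1
  · ring
  · linear_combination (-(√2 / 2) * cos (3 * t)) * sin_sq_add_cos_sq s
  · ring

theorem det3_gCurve_coeffs (a b C S c : ℝ) (hab : a ^ 2 + b ^ 2 = 1) (hCS : C ^ 2 + S ^ 2 = 1) :
    det3 ![c, c * C, c * S] ![-(c * a) * C, c * a - c * (3 + b) * S, c * (3 + b) * C]
      ![c * a * ((6 + b) * S - a), -(c * (10 + 6 * b) * C), c * (a * b - (3 + b) ^ 2 * S)]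
      = c ^ 3 * (27 + 29 * b + 11 * (a * S) + 9 * b ^ 2 - 9 * (a * S) ^ 2 - (b + a * S) ^ 3) := by
  simp only [det3_apply, cons_val_zero, cons_val_one, cons_val_two, tail_cons, head_cons]
  grind

theorem cubic_pos_of_sq_add_sq_le_one {K x : ℝ} (h : K ^ 2 + x ^ 2 ≤ 1) :
    0 < 27 + 29 * K + 11 * x + 9 * K ^ 2 - 9 * x ^ 2 - (K + x) ^ 3 := by
  nlinarith [sq_nonneg (x + 1), sq_nonneg (K + 1), sq_nonneg (x + K), sq_nonneg (x - K)]

theorem gCurve_sphere_and_convex_general (s : ℝ) (t : ℝ) :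
    onSphere (gCurve s t) ∧
    0 < det3 (gCurve s t) (deriv (gCurve s) t) (deriv (deriv (gCurve s)) t) := by
  have hc : (√2 / 2) ^ 2 = 1 / 2 := by rw [div_pow, sq_sqrt zero_le_two]; norm_num
  constructor
  · rw [onSphere, gCurve_eq_frameComb, sum_sq_frameComb]
    linear_combination (√2 / 2) ^ 2 * cos_sq_add_sin_sq (3 * t) + 2 * hc
  · rw [(hasDerivAt_deriv_gCurve s t).deriv, deriv_gCurve, gCurve_eq_frameComb, det3_frameComb,
      det3_gCurve_coeffs _ _ _ _ _ (sin_sq_add_cos_sq s) (cos_sq_add_sin_sq (3 * t))]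
    refine mul_pos (by positivity) (cubic_pos_of_sq_add_sq_le_one ?_)
    nlinarith [sin_sq_add_cos_sq s, sin_sq_add_cos_sq (3 * t), sq_nonneg (sin s * cos (3 * t))]

/-- For all `s ∈ [0,π]` and all `t`, `g_s(t)` lies on `S²` and
`det(g_s(t), ∂_t g_s(t), ∂_t² g_s(t)) > 0`. -/
theorem gCurve_sphere_and_convex (s : ℝ) (hs : s ∈ Set.Icc 0 π) (t : ℝ) :
    onSphere (gCurve s t) ∧
    0 < det3 (gCurve s t) (deriv (gCurve s) t) (deriv (deriv (gCurve s)) t) :=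
  gCurve_sphere_and_convex_general s t
end
end

section
/- Let g_s(t) = (√2/2)(α₀(s,t) + cos(3t)·α₁(s,t) + sin(3t)·α₂(s,t)) as above and let Γ_s(t) ∈ SO(3) be the frame of t ↦ g_s(t). Then Γ_s(t + 2π/3) = R·Γ_s(t) for all s, t, where R = [[-1/2, -√3/2, 0],[√3/2, -1/2, 0],[0,0,1]] is rotation by 2π/3 about the z-axis. -/
noncomputable section

open Real Matrix

/-!
Each of `α₀, α₁, α₂` is equivariant under rotations about the `z`-axis,
`αᵢ(s, t + θ) = R_z(θ) αᵢ(s, t)`, and the coefficients `cos 3t`, `sin 3t` of `g_s` are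
`2π/3`-periodic, so `g_s(t + 2π/3) = R g_s(t)` with `R = R_z(2π/3)`. Differentiating, `g_s'`
transforms the same way, and since `R` preserves lengths and cross products, each column of the
frame is multiplied by `R`.
-/

def rotZ (θ : ℝ) : Matrix (Fin 3) (Fin 3) ℝ :=
  !![cos θ, -sin θ, 0; sin θ, cos θ, 0; 0, 0, 1]

lemma cos_two_pi_div_three : cos (2 * π / 3) = -(1 / 2) := by
  rw [show 2 * π / 3 = π - π / 3 by ring, cos_pi_sub, cos_pi_div_three]

lemma sin_two_pi_div_three : sin (2 * π / 3) = √3 / 2 := by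
  rw [show 2 * π / 3 = π - π / 3 by ring, sin_pi_sub, sin_pi_div_three]

lemma rotZ_two_pi_div_three :
    rotZ (2 * π / 3) = !![-1/2, -Real.sqrt 3 / 2, 0; Real.sqrt 3 / 2, -1/2, 0; 0, 0, 1] := by
  rw [rotZ, cos_two_pi_div_three, sin_two_pi_div_three]
  norm_num [neg_div]

lemma alpha0_add (s t θ : ℝ) : alpha0 s (t + θ) = rotZ θ *ᵥ alpha0 s t := by
  ext i; fin_cases i <;> simp [alpha0, rotZ, cos_add, sin_add] <;> ring

lemma alpha1_add (s t θ : ℝ) : alpha1 s (t + θ) = rotZ θ *ᵥ alpha1 s t := by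
  ext i; fin_cases i <;> simp [alpha1, rotZ, cos_add, sin_add] <;> ring

lemma alpha2_add (s t θ : ℝ) : alpha2 s (t + θ) = rotZ θ *ᵥ alpha2 s t := by
  ext i; fin_cases i <;> simp [alpha2, rotZ, cos_add, sin_add] <;> ring

lemma gCurve_add_two_pi_div_three (s t : ℝ) :
    gCurve s (t + 2 * π / 3) = rotZ (2 * π / 3) *ᵥ gCurve s t := by
  have hperiod : 3 * (t + 2 * π / 3) = 3 * t + 2 * π := by ring
  simp only [gCurve, alpha0_add, alpha1_add, alpha2_add, hperiod, cos_add_two_pi,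
    sin_add_two_pi, mulVec_smul, mulVec_add]

lemma enorm3_rotZ_mulVec (θ : ℝ) (v : Fin 3 → ℝ) : enorm3 (rotZ θ *ᵥ v) = enorm3 v := by
  unfold enorm3
  congr 1
  simp only [mulVec, dotProduct, rotZ, Fin.isValue, of_apply, cons_val', cons_val_fin_one,
    cons_val_zero, Fin.sum_univ_three, cons_val_one, neg_mul, cons_val, zero_mul, add_zero, one_mul,
    zero_add, add_left_inj]
  linear_combination (v 0 ^ 2 + v 1 ^ 2) * sin_sq_add_cos_sq θ

lemma cross3_rotZ_mulVec (θ : ℝ) (u v : Fin 3 → ℝ) :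
    cross3 (rotZ θ *ᵥ u) (rotZ θ *ᵥ v) = rotZ θ *ᵥ cross3 u v := by
  ext i
  fin_cases i <;>
    simp only [cross3, mulVec, dotProduct, rotZ, Fin.isValue, of_apply, cons_val',
      cons_val_fin_one, cons_val_one, cons_val_zero, Fin.sum_univ_three, cons_val, zero_mul,
      add_zero, one_mul, zero_add, neg_mul, Fin.zero_eta, Fin.mk_one, Fin.reduceFinMk]
  · ring
  · ring
  · linear_combination (u 0 * v 1 - u 1 * v 0) * sin_sq_add_cos_sq θ

lemma differentiable_gCurve (s : ℝ) : Differentiable ℝ (gCurve s) := by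
  rw [differentiable_pi]
  intro i
  fin_cases i <;> simp [gCurve, alpha0, alpha1, alpha2] <;> fun_prop

lemma deriv_mulVec {𝕜 : Type*} [NontriviallyNormedField 𝕜] [CompleteSpace 𝕜]
    {m n : Type*} [Fintype m] [Fintype n] (A : Matrix m n 𝕜) {γ : 𝕜 → n → 𝕜} {t : 𝕜}
    (hγ : DifferentiableAt 𝕜 γ t) : deriv (fun u ↦ A *ᵥ γ u) t = A *ᵥ deriv γ t :=
  ((Matrix.mulVecLin A).toContinuousLinearMap.hasFDerivAt.comp_hasDerivAt t hγ.hasDerivAt).deriv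

lemma mul_transpose_of {R : Type*} [CommSemiring R] {l m n : Type*} [Fintype n]
    (A : Matrix l n R) (f : m → n → R) :
    A * (of f)ᵀ = (of fun i ↦ A *ᵥ f i)ᵀ := by
  ext i j
  simp [mul_apply, mulVec, dotProduct]

lemma frame_add_eq_mul_frame {γ : ℝ → Fin 3 → ℝ} {A : Matrix (Fin 3) (Fin 3) ℝ} {c t : ℝ}
    (hA_enorm : ∀ v, enorm3 (A *ᵥ v) = enorm3 v)
    (hA_cross : ∀ u v, cross3 (A *ᵥ u) (A *ᵥ v) = A *ᵥ cross3 u v)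
    (hγ : ∀ u, γ (u + c) = A *ᵥ γ u) (hγt : DifferentiableAt ℝ γ t) :
    frame γ (t + c) = A * frame γ t := by
  have hderiv : deriv γ (t + c) = A *ᵥ deriv γ t := by
    rw [← deriv_comp_add_const, funext hγ, deriv_mulVec A hγt]
  rw [frame, frame, mul_transpose_of, hγ, hderiv, hA_enorm, ← mulVec_smul, hA_cross]
  congr 2
  ext i : 1
  fin_cases i <;> rfl

/-- The frame `Γ_s` of `g_s` satisfies `Γ_s(t + 2π/3) = R · Γ_s(t)` where `R` is
the rotation by `2π/3` about the `z`-axis. -/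
theorem frame_gCurve_symmetry (s t : ℝ) :
    frame (gCurve s) (t + 2 * π / 3) =
      !![-1/2, -Real.sqrt 3 / 2, 0; Real.sqrt 3 / 2, -1/2, 0; 0, 0, 1] *
        frame (gCurve s) t := by
  rw [← rotZ_two_pi_div_three]
  exact frame_add_eq_mul_frame (enorm3_rotZ_mulVec _) (cross3_rotZ_mulVec _)
    (gCurve_add_two_pi_div_three s) (differentiable_gCurve s t)
end
end
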